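/- Let X be a Lévy process with E[e^{−θ X_1}] < ∞ for some θ > 0. Then E[e^{−θ I_1}] < ∞, where I_1 = inf_{0≤t≤1} X_t. -/

import Mathlib

open MeasureTheory ProbabilityTheory Set
open scoped ENNReal

/-- A (real-valued) Lévy process: càdlàg paths, `X 0 = 0`, stationary and independent
increments. -/
structure IsLevy {Ω : Type*} [MeasurableSpace Ω] (P : Measure Ω) (X : ℝ → Ω → ℝ) : Prop where
  meas : ∀ t, Measurable (X t)
  init : ∀ ω, X 0 ω = 0
  rightCont : ∀ ω, ∀ t : ℝ, ContinuousWithinAt (fun s => X s ω) (Set.Ici t) t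
  leftLim : ∀ ω, ∀ t : ℝ, ∃ l : ℝ, Filter.Tendsto (fun s => X s ω) (nhdsWithin t (Set.Iio t)) (nhds l)
  stationary : ∀ s t : ℝ, 0 ≤ s → s ≤ t →
    P.map (fun ω => X t ω - X s ω) = P.map (X (t - s))
  indepIncr : ∀ (n : ℕ) (t : ℕ → ℝ), Monotone t → 0 ≤ t 0 →
    iIndepFun
      (fun (i : Fin n) ω => X (t ((i : ℕ) + 1)) ω - X (t (i : ℕ)) ω) P

/-!
Discretise: by right-continuity, `I_1` is the decreasing limit of the grid minima
`m_M = min_{k ≤ M} X_{k/M}` along `M = 2^N`, so by monotone convergence it suffices to bound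
`E[e^{-θ m_M}]` uniformly in `M`. Splitting `{m_M < a}` according to the first grid time at which
`X` drops below `a`, and using that the remaining increment `X_1 - X_{k/M}` is independent of the
past and is `≤ u` with probability at least `1/2` (Willekens), gives
`P(m_M < a) ≤ 2 P(X_1 - u ≤ a)`, hence `E[e^{-θ m_M}] ≤ 2 e^{θu} E[e^{-θ X_1}]`.
A level `u` that works for all grid times exists because
`E[e^{-θ X_{k/M}}] = E[e^{-θ X_{1/M}}]^k ≤ max(1, E[e^{-θ X_1}])` bounds the lower tails of all
`X_s`, `s ∈ ℚ ∩ [0, 1]`, uniformly, and independence of increments turns this into a uniform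
bound on their upper tails.
-/

open Filter Topology Function

section

variable {Ω : Type*} {mΩ : MeasurableSpace Ω} {P : Measure Ω} {θ : ℝ}

noncomputable def laplace (P : Measure Ω) (θ : ℝ) (Y : Ω → ℝ) : ℝ≥0∞ :=
  ∫⁻ ω, ENNReal.ofReal (Real.exp (-θ * Y ω)) ∂P

lemma measurable_ofReal_exp_neg_mul (θ : ℝ) :
    Measurable fun y : ℝ => ENNReal.ofReal (Real.exp (-θ * y)) := by
  fun_prop

lemma laplace_sub_const (Y : Ω → ℝ) (c : ℝ) :
    laplace P θ (fun ω => Y ω - c) = ENNReal.ofReal (Real.exp (θ * c)) * laplace P θ Y := by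
  rw [laplace, laplace, ← lintegral_const_mul' _ _ ENNReal.ofReal_ne_top]
  congr 1 with ω
  rw [← ENNReal.ofReal_mul (Real.exp_nonneg _), ← Real.exp_add]
  ring_nf

lemma laplace_add_of_indepFun {Y Z : Ω → ℝ} (hY : Measurable Y) (hZ : Measurable Z)
    (hYZ : Y ⟂ᵢ[P] Z) :
    laplace P θ (fun ω => Y ω + Z ω) = laplace P θ Y * laplace P θ Z := by
  have hexp := measurable_ofReal_exp_neg_mul θ
  calc laplace P θ (fun ω => Y ω + Z ω)
      = ∫⁻ ω, ((fun y => ENNReal.ofReal (Real.exp (-θ * y))) ∘ Y) ω *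
          ((fun y => ENNReal.ofReal (Real.exp (-θ * y))) ∘ Z) ω ∂P := by
        refine lintegral_congr fun ω => ?_
        rw [Function.comp_apply, Function.comp_apply, ← ENNReal.ofReal_mul (Real.exp_nonneg _),
          ← Real.exp_add, mul_add]
    _ = laplace P θ Y * laplace P θ Z :=
        lintegral_mul_eq_lintegral_mul_lintegral_of_indepFun'' (hexp.comp hY).aemeasurable
          (hexp.comp hZ).aemeasurable (hYZ.comp hexp hexp)

lemma measure_le_le_exp_mul_laplace (hθ : 0 ≤ θ) {Y : Ω → ℝ} (hY : Measurable Y) (a : ℝ) :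
    P {ω | Y ω ≤ a} ≤ ENNReal.ofReal (Real.exp (θ * a)) * laplace P θ Y := by
  calc P {ω | Y ω ≤ a}
      ≤ P {ω | ENNReal.ofReal (Real.exp (-θ * a)) ≤ ENNReal.ofReal (Real.exp (-θ * Y ω))} :=
        measure_mono fun ω (h : Y ω ≤ a) =>
          ENNReal.ofReal_le_ofReal (Real.exp_le_exp.2 (by nlinarith))
    _ ≤ laplace P θ Y / ENNReal.ofReal (Real.exp (-θ * a)) :=
        meas_ge_le_lintegral_div ((measurable_ofReal_exp_neg_mul θ).comp hY).aemeasurable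
          (by positivity) ENNReal.ofReal_ne_top
    _ = ENNReal.ofReal (Real.exp (θ * a)) * laplace P θ Y := by
        rw [div_eq_mul_inv, mul_comm, ← ENNReal.ofReal_inv_of_pos (Real.exp_pos _),
          ← Real.exp_neg, neg_mul, neg_neg]

lemma laplace_le_of_measure_lt_le (hθ : 0 < θ) {Y Z : Ω → ℝ} (hY : Measurable Y)
    (hZ : Measurable Z) {K : ℝ≥0∞} (h : ∀ a, P {ω | Y ω < a} ≤ K * P {ω | Z ω ≤ a}) :
    laplace P θ Y ≤ K * laplace P θ Z := by
  have hlevel : ∀ t > 0, ∀ y, (t < Real.exp (-θ * y) ↔ y < -Real.log t / θ) ∧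
      (t ≤ Real.exp (-θ * y) ↔ y ≤ -Real.log t / θ) := by
    intro t ht y
    rw [← Real.log_lt_iff_lt_exp ht, ← Real.log_le_iff_le_exp ht, lt_div_iff₀ hθ, le_div_iff₀ hθ]
    constructor <;> constructor <;> intro <;> linarith
  rw [laplace, laplace,
    lintegral_eq_lintegral_meas_lt P (ae_of_all _ fun _ => Real.exp_nonneg _) (by fun_prop),
    lintegral_eq_lintegral_meas_le P (ae_of_all _ fun _ => Real.exp_nonneg _) (by fun_prop),
    ← lintegral_const_mul K (f := fun t => P {ω | t ≤ Real.exp (-θ * Z ω)})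
      (Antitone.measurable fun t t' htt' => measure_mono fun ω hω => htt'.trans hω)]
  refine setLIntegral_mono' measurableSet_Ioi fun t ht => ?_
  simp only [(hlevel t ht _).1, (hlevel t ht _).2]
  exact h _

lemma mul_measure_exists_lt_le {ℱ : Filtration ℕ mΩ} {Y : ℕ → Ω → ℝ} {S : Ω → ℝ}
    (hY : Adapted ℱ Y) (hS : Measurable S) {M : ℕ}
    (hind : ∀ k ≤ M, Indep (ℱ k) (MeasurableSpace.comap (fun ω => S ω - Y k ω) inferInstance) P)
    {p : ℝ≥0∞} {c : ℝ} (hp : ∀ k ≤ M, p ≤ P {ω | S ω - Y k ω ≤ c}) (a : ℝ) :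
    p * P {ω | ∃ k ≤ M, Y k ω < a} ≤ P {ω | S ω ≤ a + c} := by
  set A : ℕ → Set Ω := fun k => Y k ⁻¹' Iio a ∩ ⋂ j ∈ Finset.range k, Y j ⁻¹' Ici a
  set D : ℕ → Set Ω := fun k => (fun ω => S ω - Y k ω) ⁻¹' Iic c
  have hAℱ (k : ℕ) : MeasurableSet[ℱ k] (A k) :=
    (hY k measurableSet_Iio).inter <| Finset.measurableSet_biInter _ fun j hj =>
      (hY j).mono (ℱ.mono (Finset.mem_range.1 hj).le) le_rfl measurableSet_Ici
  have hA (k : ℕ) : MeasurableSet (A k) := ℱ.le k _ (hAℱ k)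
  have hD (k : ℕ) : MeasurableSet (D k) :=
    (hS.sub ((hY k).mono (ℱ.le k) le_rfl)) measurableSet_Iic
  have hdisj : Pairwise (Disjoint on A) := by
    refine (pairwise_disjoint_on A).2 fun j k hjk => Set.disjoint_left.2 fun ω hj hk => ?_
    simp only [A, mem_inter_iff, mem_preimage, mem_Iio, mem_iInter, Finset.mem_range,
      mem_Ici] at hj hk
    exact (hk.2 j hjk).not_gt hj.1
  have hunion : {ω | ∃ k ≤ M, Y k ω < a} = ⋃ k ∈ Finset.range (M + 1), A k := by
    ext ω
    simp only [A, mem_ofPred_eq, mem_iUnion, mem_inter_iff, mem_preimage, mem_Iio, mem_iInter,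
      Finset.mem_range, mem_Ici, Nat.lt_succ_iff]
    refine ⟨fun hex => ?_, fun ⟨k, hk, hlt, _⟩ => ⟨k, hk, hlt⟩⟩
    refine ⟨Nat.find hex, (Nat.find_spec hex).1, (Nat.find_spec hex).2, fun j hj => ?_⟩
    exact not_lt.1 fun hlt => Nat.find_min hex hj ⟨hj.le.trans (Nat.find_spec hex).1, hlt⟩
  calc p * P {ω | ∃ k ≤ M, Y k ω < a}
      = ∑ k ∈ Finset.range (M + 1), p * P (A k) := by
        rw [hunion, measure_biUnion_finset (hdisj.set_pairwise _) fun k _ => hA k, Finset.mul_sum]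
    _ ≤ ∑ k ∈ Finset.range (M + 1), P (A k ∩ D k) := by
        refine Finset.sum_le_sum fun k hk => ?_
        have hkM := Nat.lt_succ_iff.1 (Finset.mem_range.1 hk)
        rw [(Indep_iff _ _ _).1 (hind k hkM) _ _ (hAℱ k) ⟨Iic c, measurableSet_Iic, rfl⟩,
          mul_comm]
        exact mul_le_mul_right (hp k hkM) _
    _ = P (⋃ k ∈ Finset.range (M + 1), A k ∩ D k) :=
        (measure_biUnion_finset ((hdisj.mono fun _ _ => .mono inter_subset_left
          inter_subset_left).set_pairwise _) fun k _ => (hA k).inter (hD k)).symm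
    _ ≤ P {ω | S ω ≤ a + c} := by
        refine measure_mono fun ω hω => ?_
        simp only [A, D, mem_iUnion, mem_inter_iff, mem_preimage, mem_Iio, mem_Iic] at hω
        obtain ⟨k, -, ⟨hlt, -⟩, hle⟩ := hω
        show S ω ≤ a + c
        linarith

lemma exists_measure_lt_le [IsFiniteMeasure P] {Y : Ω → ℝ} (hY : Measurable Y) {ε : ℝ≥0∞}
    (hε : 0 < ε) : ∃ x : ℝ, P {ω | x < Y ω} ≤ ε := by
  have h := tendsto_measure_iInter_atTop (μ := P) (s := fun x : ℝ => {ω | x < Y ω})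
    (fun _ => (measurableSet_lt measurable_const hY).nullMeasurableSet)
    (fun _ _ hxy _ h => hxy.trans_lt h) ⟨0, measure_ne_top _ _⟩
  rw [iInter_eq_empty_iff.2 fun ω => ⟨Y ω, by simp⟩, measure_empty] at h
  exact (h.eventually (eventually_le_nhds hε)).exists

def unitGrid : Set ℝ := {s | ∃ M k : ℕ, M ≠ 0 ∧ k ≤ M ∧ s = k / M}

lemma unitGrid_subset_Icc : unitGrid ⊆ Icc 0 1 := by
  rintro _ ⟨M, k, -, hk, rfl⟩
  exact ⟨by positivity, div_le_one_of_le₀ (by exact_mod_cast hk) (Nat.cast_nonneg M)⟩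

lemma one_sub_mem_unitGrid {s : ℝ} (hs : s ∈ unitGrid) : 1 - s ∈ unitGrid := by
  obtain ⟨M, k, hM, hk, rfl⟩ := hs
  refine ⟨M, M - k, hM, Nat.sub_le M k, ?_⟩
  rw [Nat.cast_sub hk, sub_div, div_self (Nat.cast_ne_zero.2 hM)]

noncomputable def gridMin (X : ℝ → Ω → ℝ) (M : ℕ) (ω : Ω) : ℝ :=
  ⨅ k : Fin (M + 1), X ((k : ℕ) / M) ω

lemma gridMin_le (X : ℝ → Ω → ℝ) {M k : ℕ} (hk : k ≤ M) (ω : Ω) :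
    gridMin X M ω ≤ X (k / M) ω :=
  ciInf_le (Finite.bddBelow_range _) (⟨k, Nat.lt_succ_of_le hk⟩ : Fin (M + 1))

lemma gridMin_lt_iff {X : ℝ → Ω → ℝ} {M : ℕ} {ω : Ω} {a : ℝ} :
    gridMin X M ω < a ↔ ∃ k ≤ M, X (k / M) ω < a := by
  rw [gridMin, ciInf_lt_iff (Finite.bddBelow_range _)]
  exact ⟨fun ⟨k, hk⟩ => ⟨k, Nat.lt_succ_iff.1 k.2, hk⟩,
    fun ⟨k, hkM, hk⟩ => ⟨⟨k, Nat.lt_succ_of_le hkM⟩, hk⟩⟩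

lemma gridMin_mul_le (X : ℝ → Ω → ℝ) {n : ℕ} (hn : n ≠ 0) (M : ℕ) (ω : Ω) :
    gridMin X (M * n) ω ≤ gridMin X M ω := by
  refine le_ciInf fun k =>
    (gridMin_le X (Nat.mul_le_mul_right n (Nat.lt_succ_iff.1 k.2)) ω).trans_eq ?_
  push_cast
  rw [mul_div_mul_right _ _ (Nat.cast_ne_zero.2 hn)]

lemma measurable_gridMin {X : ℝ → Ω → ℝ} (hX : ∀ t, Measurable (X t)) (M : ℕ) :
    Measurable (gridMin X M) :=
  Measurable.iInf fun _ => hX _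

def dyadicPoints : Set ℝ := {s | ∃ N k : ℕ, k ≤ 2 ^ N ∧ s = k / 2 ^ N}

lemma mem_closure_dyadicPoints_inter_Ici {t : ℝ} (ht : t ∈ Icc 0 1) :
    t ∈ closure (dyadicPoints ∩ Ici t) := by
  refine Metric.mem_closure_iff.2 fun ε hε => ?_
  obtain ⟨N, hN⟩ := exists_pow_lt_of_lt_one hε (by norm_num : (2⁻¹ : ℝ) < 1)
  have h2N : (0 : ℝ) < 2 ^ N := by positivity
  set k := ⌈t * 2 ^ N⌉₊
  have hk : t ≤ k / 2 ^ N := (le_div_iff₀ h2N).2 (Nat.le_ceil _)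
  have hk' : (k / 2 ^ N : ℝ) < t + 2⁻¹ ^ N := by
    rw [div_lt_iff₀ h2N, add_mul, inv_pow, inv_mul_cancel₀ h2N.ne']
    exact Nat.ceil_lt_add_one (by nlinarith [ht.1])
  refine ⟨k / 2 ^ N, ⟨⟨N, k, Nat.ceil_le.2 ?_, rfl⟩, hk⟩, ?_⟩
  · push_cast
    nlinarith [ht.2]
  · rw [Real.dist_eq, abs_of_nonpos (by linarith)]
    linarith

lemma sInf_image_Icc_mem_closure {f : ℝ → ℝ} (hf : ∀ t, ContinuousWithinAt f (Ici t) t)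
    (h0 : f 0 = 0) : sInf (f '' Icc 0 1) ∈ closure (f '' dyadicPoints) := by
  by_cases hbdd : BddBelow (f '' Icc 0 1)
  · refine closure_minimal ?_ isClosed_closure
      (csInf_mem_closure ((nonempty_Icc.2 zero_le_one).image f) hbdd)
    rintro _ ⟨t, ht, rfl⟩
    exact closure_mono (image_mono inter_subset_left)
      (((hf t).mono inter_subset_right).mem_closure_image (mem_closure_dyadicPoints_inter_Ici ht))
  · -- `sInf` of a set unbounded below is the junk value `0 = f 0`
    rw [Real.sInf_of_not_bddBelow hbdd, ← h0]
    exact subset_closure ⟨0, ⟨0, 0, by simp, by simp⟩, rfl⟩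

namespace IsLevy

variable {X : ℝ → Ω → ℝ}

lemma identDistrib_sub (hX : IsLevy P X) {s u : ℝ} (hs : 0 ≤ s) (hsu : s ≤ u) :
    IdentDistrib (fun ω => X u ω - X s ω) (X (u - s)) P P where
  aemeasurable_fst := ((hX.meas u).sub (hX.meas s)).aemeasurable
  aemeasurable_snd := (hX.meas _).aemeasurable
  map_eq := hX.stationary s u hs hsu

lemma indep_iSup_comap_sub (hX : IsLevy P X) {t : ℕ → ℝ} (ht : Monotone t) (ht0 : t 0 = 0)
    {k : ℕ} {u : ℝ} (hu : t k ≤ u) :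
    Indep (⨆ j ≤ k, MeasurableSpace.comap (X (t j)) inferInstance)
      (MeasurableSpace.comap (fun ω => X u ω - X (t k) ω) inferInstance) P := by
  -- `X (t j)` is the sum of the first `j` increments along `τ`, and `X u - X (t k)` is the last
  set τ : ℕ → ℝ := fun j => if j ≤ k then t j else u
  have hτ : Monotone τ := by
    intro i j hij
    simp only [τ]
    split_ifs with hi hj hj
    · exact ht hij
    · exact (ht hi).trans hu
    · omega
    · exact le_rfl
  set g : Fin (k + 1) → Ω → ℝ := fun i ω => X (τ (i + 1)) ω - X (τ i) ω
  have hg (i : Fin (k + 1)) : Measurable (g i) := (hX.meas _).sub (hX.meas _)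
  have hindep := indep_iSup_of_disjoint (fun i => (hg i).comap_le)
    ((iIndepFun_iff_iIndep _ _ _).1 (hX.indepIncr (k + 1) τ hτ (by simp [τ, ht0])))
    (Set.disjoint_singleton_right.2 (by simp) :
      Disjoint {i : Fin (k + 1) | (i : ℕ) < k} {Fin.last k})
  refine indep_of_indep_of_le_right (indep_of_indep_of_le_left hindep ?_) ?_
  · refine iSup₂_le fun j hj => (Measurable.comap_le ?_)
    have hsum : X (t j) = fun ω => ∑ i ∈ Finset.range j, (X (τ (i + 1)) ω - X (τ i) ω) := by
      ext ω
      rw [Finset.sum_range_sub (fun i => X (τ i) ω)]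
      simp [τ, hj, ht0, hX.init ω]
    rw [hsum]
    refine Finset.measurable_sum _ fun i hi => Measurable.of_comap_le ?_
    have hik : i < k := (Finset.mem_range.1 hi).trans_le hj
    exact le_iSup₂_of_le (f := fun i _ => MeasurableSpace.comap (g i) inferInstance)
      (⟨i, by omega⟩ : Fin (k + 1)) hik le_rfl
  · refine le_iSup₂_of_le (f := fun i _ => MeasurableSpace.comap (g i) inferInstance)
      (Fin.last k) rfl (le_of_eq ?_)
    simp [g, τ]

lemma indepFun_sub (hX : IsLevy P X) {s u : ℝ} (hs : 0 ≤ s) (hsu : s ≤ u) :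
    X s ⟂ᵢ[P] fun ω => X u ω - X s ω := by
  have h := hX.indep_iSup_comap_sub (t := fun j => j * s)
    (fun i j hij => mul_le_mul_of_nonneg_right (Nat.cast_le.2 hij) hs) (by simp) (k := 1)
    (by simpa using hsu)
  simp only [Nat.cast_one, one_mul] at h
  refine (IndepFun_iff_Indep _ _ _).2 (indep_of_indep_of_le_left h ?_)
  refine le_iSup₂_of_le (f := fun (j : ℕ) _ => MeasurableSpace.comap (X (j * s)) inferInstance) 1
    le_rfl ?_
  simp

lemma laplace_add (hX : IsLevy P X) (θ : ℝ) {s t : ℝ} (hs : 0 ≤ s) (ht : 0 ≤ t) :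
    laplace P θ (X (s + t)) = laplace P θ (X s) * laplace P θ (X t) := by
  have hst : s ≤ s + t := le_add_of_nonneg_right ht
  have hsplit : X (s + t) = fun ω => X s ω + (X (s + t) ω - X s ω) := by
    ext ω
    ring
  rw [hsplit, laplace_add_of_indepFun (Z := fun ω => X (s + t) ω - X s ω) (hX.meas s)
    ((hX.meas _).sub (hX.meas s)) (hX.indepFun_sub hs hst)]
  congr 1
  simpa [laplace] using ((hX.identDistrib_sub hs hst).comp
    (measurable_ofReal_exp_neg_mul θ)).lintegral_eq

lemma exp_neg_sInf_le_iSup_gridMin (hX : IsLevy P X) (hθ : 0 ≤ θ) (ω : Ω) :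
    ENNReal.ofReal (Real.exp (-θ * sInf ((fun t => X t ω) '' Icc 0 1))) ≤
      ⨆ N : ℕ, ENNReal.ofReal (Real.exp (-θ * gridMin X (2 ^ N) ω)) := by
  refine closure_minimal (s := (fun t => X t ω) '' dyadicPoints) ?_
    (isClosed_le (f := fun y => ENNReal.ofReal (Real.exp (-θ * y)))
      (ENNReal.continuous_ofReal.comp (by fun_prop)) continuous_const)
    (sInf_image_Icc_mem_closure (hX.rightCont ω) (hX.init ω))
  rintro _ ⟨s, ⟨N, k, hk, rfl⟩, rfl⟩
  refine le_iSup_of_le (f := fun N : ℕ => ENNReal.ofReal (Real.exp (-θ * gridMin X (2 ^ N) ω)))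
    N (ENNReal.ofReal_le_ofReal (Real.exp_le_exp.2
      (mul_le_mul_of_nonpos_left ?_ (neg_nonpos.2 hθ))))
  simpa using gridMin_le X hk ω

variable [IsProbabilityMeasure P]

lemma laplace_natCast_div (hX : IsLevy P X) (θ : ℝ) (M k : ℕ) :
    laplace P θ (X (k / M)) = laplace P θ (X (1 / M)) ^ k := by
  induction k with
  | zero => simp [laplace, hX.init]
  | succ k ih =>
    rw [Nat.cast_succ, add_div, hX.laplace_add θ (by positivity) (by positivity), ih, pow_succ]

lemma laplace_le_max (hX : IsLevy P X) (θ : ℝ) {s : ℝ} (hs : s ∈ unitGrid) :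
    laplace P θ (X s) ≤ max 1 (laplace P θ (X 1)) := by
  obtain ⟨M, k, hM, hk, rfl⟩ := hs
  have h1 : laplace P θ (X 1) = laplace P θ (X (1 / M)) ^ M := by
    have h := hX.laplace_natCast_div θ M M
    rwa [div_self (Nat.cast_ne_zero.2 hM : (M : ℝ) ≠ 0)] at h
  rw [hX.laplace_natCast_div θ M k, h1]
  rcases le_total (laplace P θ (X (1 / M))) 1 with h | h
  · exact le_max_of_le_left (pow_le_one₀ zero_le h)
  · exact le_max_of_le_right (pow_le_pow_right₀ h hk)

lemma exists_measure_lt_neg_le_half (hX : IsLevy P X) (hθ : 0 < θ)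
    (hfin : laplace P θ (X 1) ≠ ∞) : ∃ v : ℝ, ∀ s ∈ unitGrid, P {ω | X s ω < -v} ≤ 2⁻¹ := by
  set C := max 1 (laplace P θ (X 1))
  have htend : Tendsto (fun v : ℝ => ENNReal.ofReal (Real.exp (θ * -v)) * C) atTop (𝓝 0) := by
    simpa using ENNReal.Tendsto.mul_const (ENNReal.tendsto_ofReal (Real.tendsto_exp_atBot.comp
      (tendsto_neg_atTop_atBot.const_mul_atBot hθ))) (Or.inr (max_ne_top (by simp) hfin))
  obtain ⟨v, hv⟩ :=
    (htend.eventually (eventually_le_nhds (by norm_num : (0 : ℝ≥0∞) < 2⁻¹))).exists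
  refine ⟨v, fun s hs => ?_⟩
  calc P {ω | X s ω < -v}
      ≤ P {ω | X s ω ≤ -v} := measure_mono (ofPred_subset_ofPred.2 fun _ => le_of_lt)
    _ ≤ ENNReal.ofReal (Real.exp (θ * -v)) * laplace P θ (X s) :=
        measure_le_le_exp_mul_laplace hθ.le (hX.meas s) _
    _ ≤ ENNReal.ofReal (Real.exp (θ * -v)) * C := by gcongr; exact hX.laplace_le_max θ hs
    _ ≤ 2⁻¹ := hv

lemma half_le_measure_sub_mem (hX : IsLevy P X) {s : ℝ} (hs : s ∈ Icc 0 1) {B : Set ℝ}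
    (hB : MeasurableSet B) (h : P (X (1 - s) ⁻¹' Bᶜ) ≤ 2⁻¹) :
    2⁻¹ ≤ P ((fun ω => X 1 ω - X s ω) ⁻¹' B) := by
  have hmeas : MeasurableSet ((fun ω => X 1 ω - X s ω) ⁻¹' Bᶜ) :=
    ((hX.meas 1).sub (hX.meas s)) hB.compl
  rw [← compl_compl B, preimage_compl, prob_compl_eq_one_sub hmeas,
    (hX.identDistrib_sub hs.1 hs.2).measure_mem_eq hB.compl, ← ENNReal.one_sub_inv_two]
  exact tsub_le_tsub_left h 1

lemma exists_measure_lt_le_half (hX : IsLevy P X) (hθ : 0 < θ)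
    (hfin : laplace P θ (X 1) ≠ ∞) : ∃ u : ℝ, ∀ s ∈ unitGrid, P {ω | u < X s ω} ≤ 2⁻¹ := by
  obtain ⟨v, hv⟩ := hX.exists_measure_lt_neg_le_half hθ hfin
  obtain ⟨n, hn⟩ := exists_measure_lt_le (P := P) (hX.meas 1) (ε := 2⁻¹ * 2⁻¹) (by norm_num)
  refine ⟨n + v, fun s hs => ?_⟩
  have hsI := unitGrid_subset_Icc hs
  have hincr : 2⁻¹ ≤ P ((fun ω => X 1 ω - X s ω) ⁻¹' Ici (-v)) :=
    hX.half_le_measure_sub_mem hsI measurableSet_Ici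
      (by rw [compl_Ici]; exact hv _ (one_sub_mem_unitGrid hs))
  rw [← ENNReal.mul_le_mul_iff_left (by norm_num : (2⁻¹ : ℝ≥0∞) ≠ 0) (by simp)]
  calc P {ω | n + v < X s ω} * 2⁻¹
      ≤ P (X s ⁻¹' Ioi (n + v)) * P ((fun ω => X 1 ω - X s ω) ⁻¹' Ici (-v)) :=
        mul_le_mul_right hincr _
    _ = P (X s ⁻¹' Ioi (n + v) ∩ (fun ω => X 1 ω - X s ω) ⁻¹' Ici (-v)) :=
        ((hX.indepFun_sub hsI.1 hsI.2).measure_inter_preimage_eq_mul _ _ measurableSet_Ioi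
          measurableSet_Ici).symm
    _ ≤ P {ω | n < X 1 ω} := measure_mono fun ω ⟨h1, h2⟩ => by
        simp only [mem_preimage, mem_Ioi, mem_Ici] at h1 h2
        show (n : ℝ) < X 1 ω
        linarith
    _ ≤ 2⁻¹ * 2⁻¹ := hn

lemma exists_measure_gridMin_lt_le (hX : IsLevy P X) (hθ : 0 < θ)
    (hfin : laplace P θ (X 1) ≠ ∞) :
    ∃ u : ℝ, ∀ M ≠ 0, ∀ a, P {ω | gridMin X M ω < a} ≤ 2 * P {ω | X 1 ω - u ≤ a} := by
  obtain ⟨u, hu⟩ := hX.exists_measure_lt_le_half hθ hfin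
  refine ⟨u, fun M hM a => ?_⟩
  have hgrid (k : ℕ) (hk : k ≤ M) : (k / M : ℝ) ∈ unitGrid := ⟨M, k, hM, hk, rfl⟩
  have h := mul_measure_exists_lt_le (P := P) (Y := fun k => X (k / M)) (S := X 1)
    (ℱ := Filtration.natural (fun k : ℕ => X (k / M)) fun _ => (hX.meas _).stronglyMeasurable)
    (Filtration.stronglyAdapted_natural _).adapted (hX.meas 1)
    (fun k hk => hX.indep_iSup_comap_sub
      (fun i j hij => by gcongr) (by simp) (unitGrid_subset_Icc (hgrid k hk)).2)
    (p := 2⁻¹) (c := u)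
    (fun k hk => hX.half_le_measure_sub_mem (unitGrid_subset_Icc (hgrid k hk)) measurableSet_Iic
      (by rw [compl_Iic]; exact hu _ (one_sub_mem_unitGrid (hgrid k hk)))) a
  rw [← ENNReal.inv_mul_le_iff (by norm_num) (by norm_num)]
  simpa only [gridMin_lt_iff, sub_le_iff_le_add] using h

lemma exists_laplace_gridMin_le (hX : IsLevy P X) (hθ : 0 < θ)
    (hfin : laplace P θ (X 1) ≠ ∞) :
    ∃ K : ℝ≥0∞, K ≠ ∞ ∧ ∀ M ≠ 0, laplace P θ (gridMin X M) ≤ K := by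
  obtain ⟨u, hu⟩ := hX.exists_measure_gridMin_lt_le hθ hfin
  refine ⟨2 * (ENNReal.ofReal (Real.exp (θ * u)) * laplace P θ (X 1)),
    ENNReal.mul_ne_top (by norm_num) (ENNReal.mul_ne_top ENNReal.ofReal_ne_top hfin),
    fun M hM => ?_⟩
  rw [← laplace_sub_const]
  exact laplace_le_of_measure_lt_le hθ (measurable_gridMin hX.meas M)
    ((hX.meas 1).sub_const u) (hu M hM)

end IsLevy

end

/-- If `E[e^{−θX_1}] < ∞` for some `θ > 0`, then `E[e^{−θ I_1}] < ∞`, where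
`I_1 = inf_{0≤t≤1} X_t`. -/
theorem stmt11 {Ω : Type*} [MeasurableSpace Ω] (P : Measure Ω) [IsProbabilityMeasure P]
    (X : ℝ → Ω → ℝ) (hX : IsLevy P X) (θ : ℝ) (hθ : 0 < θ)
    (hfin : ∫⁻ ω, ENNReal.ofReal (Real.exp (-θ * X 1 ω)) ∂P < ∞) :
    ∫⁻ ω, ENNReal.ofReal (Real.exp (-θ * sInf ((fun t => X t ω) '' Set.Icc (0 : ℝ) 1))) ∂P
      < ∞ := by
  obtain ⟨K, hK, hbound⟩ := hX.exists_laplace_gridMin_le hθ hfin.ne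
  have hmono : Monotone fun N : ℕ => fun ω =>
      ENNReal.ofReal (Real.exp (-θ * gridMin X (2 ^ N) ω)) :=
    monotone_nat_of_le_succ fun N ω => ENNReal.ofReal_le_ofReal <| Real.exp_le_exp.2 <|
      mul_le_mul_of_nonpos_left (by rw [pow_succ]; exact gridMin_mul_le X two_ne_zero _ ω)
        (by linarith)
  calc _ ≤ ∫⁻ ω, ⨆ N : ℕ, ENNReal.ofReal (Real.exp (-θ * gridMin X (2 ^ N) ω)) ∂P :=
        lintegral_mono (hX.exp_neg_sInf_le_iSup_gridMin hθ.le)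
    _ = ⨆ N : ℕ, laplace P θ (gridMin X (2 ^ N)) :=
        lintegral_iSup (fun N => (measurable_ofReal_exp_neg_mul θ).comp
          (measurable_gridMin hX.meas _)) hmono
    _ ≤ K := iSup_le fun N => hbound _ (by positivity)
    _ < ∞ := hK.lt_top
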